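/- arXiv:1405.7565 — 4 statements merged into one kernel-verified Lean document; each statement's English description precedes it below -/
import Mathlib

section
/- Let u₀ ∈ H^s(ℝⁿ), s > 0. If the decay character r*(u₀) satisfies -n/2 < r*(u₀) < ∞, then the decay character of Λ^s u₀ satisfies -n/2 + s < r*_s(u₀) < ∞ and r*_s(u₀) = s + r*(u₀). -/
open MeasureTheory Filter Metric
open scoped FourierTransform Topology

/-- The decay indicator `ρ ↦ ρ^{-2r-n} ∫_{B(ρ)} |ξ|^{2s}|û₀(ξ)|² dξ`. -/
noncomputable def decayIndicator (n : ℕ) (u₀ : EuclideanSpace ℝ (Fin n) → ℂ)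
    (s r ρ : ℝ) : ℝ :=
  ρ ^ (-2 * r - n) *
    ∫ ξ in ball (0 : EuclideanSpace ℝ (Fin n)) ρ, ‖ξ‖ ^ (2 * s) * ‖𝓕 u₀ ξ‖ ^ 2

/-- `Λ^s u₀` has (finite) decay character `r`: `r ∈ (-n/2 + s, ∞)` and
`P_r^s(u₀) = lim_{ρ→0⁺}` of the decay indicator exists with `0 < P_r^s(u₀) < ∞`. -/
def HasDecayCharacter (n : ℕ) (u₀ : EuclideanSpace ℝ (Fin n) → ℂ) (s r : ℝ) : Prop :=
  -(n : ℝ) / 2 + s < r ∧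
    ∃ P : ℝ, 0 < P ∧
      Filter.Tendsto (decayIndicator n u₀ s r) (nhdsWithin 0 (Set.Ioi 0)) (nhds P)

/-!
Write `F(t) = ∫_{B(t)} |û₀|²`, so that the hypothesis says `F(t) ~ P t^α` with `α = 2r + n`.
By the layer-cake formula,
`∫_{B(ρ)} |ξ|^{2s} |û₀(ξ)|² dξ = ∫_0^ρ 2s t^{2s-1} (F(ρ) - F(t)) dt`,
and replacing `F(t)` by `P t^α` in the right-hand side changes it by `o(ρ^{α+2s})` while turning
it into `P α/(α+2s) ρ^{α+2s}`. Hence `P^s_{s+r}(u₀) = P (2r+n)/(2r+n+2s)`, which is positive.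
-/

open Set

lemma integral_mul_rpow_sub_one {β x : ℝ} (hβ : 0 < β) :
    ∫ t in 0..x, β * t ^ (β - 1) = x ^ β := by
  rw [intervalIntegral.integral_const_mul, integral_rpow (by left; linarith), sub_add_cancel,
    Real.zero_rpow hβ.ne', sub_zero]
  field_simp

lemma integral_mul_rpow_sub_one_mul_sub {α β ρ : ℝ} (hβ : 0 < β) (hαβ : 0 < α + β)
    (hρ : 0 ≤ ρ) :
    ∫ t in 0..ρ, β * (ρ ^ α * t ^ (β - 1) - t ^ (α + β - 1)) = α / (α + β) * ρ ^ (α + β) := by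
  rw [intervalIntegral.integral_const_mul, intervalIntegral.integral_sub,
    intervalIntegral.integral_const_mul, integral_rpow (by left; linarith),
    integral_rpow (by left; linarith), sub_add_cancel, sub_add_cancel,
    Real.zero_rpow hβ.ne', Real.zero_rpow hαβ.ne', Real.rpow_add' hρ hαβ.ne']
  · field_simp
    ring
  · exact (intervalIntegral.intervalIntegrable_rpow' (by linarith)).const_mul _
  · exact intervalIntegral.intervalIntegrable_rpow' (by linarith)

lemma exists_abs_sub_mul_rpow_le_of_tendsto {h : ℝ → ℝ} {α P c : ℝ}
    (hh : Tendsto (fun t => t ^ (-α) * h t) (𝓝[>] 0) (𝓝 P)) (hc : 0 < c) :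
    ∃ δ > 0, ∀ t ∈ Ioo 0 δ, |h t - P * t ^ α| ≤ c * t ^ α := by
  obtain ⟨δ, hδ, hball⟩ := Metric.tendsto_nhdsWithin_nhds.1 hh c hc
  refine ⟨δ, hδ, fun t ht => ?_⟩
  have hdist := hball ht.1 (by rw [Real.dist_0_eq_abs, abs_of_pos ht.1]; exact ht.2)
  have htα : 0 < t ^ α := Real.rpow_pos_of_pos ht.1 α
  have : h t - P * t ^ α = t ^ α * (t ^ (-α) * h t - P) := by
    rw [Real.rpow_neg ht.1.le]
    field_simp
  rw [this, abs_mul, abs_of_pos htα, mul_comm c, ← Real.dist_eq]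
  exact mul_le_mul_of_nonneg_left hdist.le htα.le

lemma abs_integral_mul_rpow_sub_one_mul_sub_sub_le {h : ℝ → ℝ} {α β P c ρ : ℝ}
    (hα : 0 < α) (hβ : 0 < β) (hm : Measurable h) (hρ : 0 < ρ)
    (hR : ∀ t ∈ Ioc 0 ρ, |h t - P * t ^ α| ≤ c * t ^ α) :
    |(∫ t in 0..ρ, β * t ^ (β - 1) * (h ρ - h t)) - P * α / (α + β) * ρ ^ (α + β)|
      ≤ 2 * c * ρ ^ (α + β) := by
  have hc : 0 ≤ c := (mul_nonneg_iff_of_pos_right (Real.rpow_pos_of_pos hρ α)).1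
    ((abs_nonneg _).trans (hR ρ (right_mem_Ioc.2 hρ)))
  set err : ℝ → ℝ := fun t =>
    β * t ^ (β - 1) * (h ρ - h t) - P * (β * (ρ ^ α * t ^ (β - 1) - t ^ (α + β - 1)))
  have herr_le : ∀ t ∈ Ioc 0 ρ, ‖err t‖ ≤ 2 * c * ρ ^ α * (β * t ^ (β - 1)) := by
    intro t ht
    have hpos : 0 < β * t ^ (β - 1) := mul_pos hβ (Real.rpow_pos_of_pos ht.1 _)
    have hsplit : err t = β * t ^ (β - 1) * ((h ρ - P * ρ ^ α) - (h t - P * t ^ α)) := by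
      have : t ^ (α + β - 1) = t ^ α * t ^ (β - 1) := by rw [← Real.rpow_add ht.1]; ring_nf
      simp only [err, this]
      ring
    rw [hsplit, norm_mul, Real.norm_of_nonneg hpos.le, mul_comm (2 * c * ρ ^ α)]
    refine mul_le_mul_of_nonneg_left ?_ hpos.le
    calc _ ≤ |h ρ - P * ρ ^ α| + |h t - P * t ^ α| := abs_sub _ _
      _ ≤ c * ρ ^ α + c * t ^ α := add_le_add (hR ρ (right_mem_Ioc.2 hρ)) (hR t ht)
      _ ≤ 2 * c * ρ ^ α := by
        nlinarith [mul_le_mul_of_nonneg_left (Real.rpow_le_rpow ht.1.le ht.2 hα.le) hc]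
  have hbound_int : IntervalIntegrable (fun t => 2 * c * ρ ^ α * (β * t ^ (β - 1))) volume 0 ρ :=
    ((intervalIntegral.intervalIntegrable_rpow' (by linarith)).const_mul β).const_mul _
  have herr_int : IntervalIntegrable err volume 0 ρ := by
    refine hbound_int.mono_fun' (by fun_prop) ?_
    rw [uIoc_of_le hρ.le]
    exact (ae_restrict_iff' measurableSet_Ioc).2 (ae_of_all _ herr_le)
  have hmodel_int : IntervalIntegrable
      (fun t => P * (β * (ρ ^ α * t ^ (β - 1) - t ^ (α + β - 1)))) volume 0 ρ :=
    (((intervalIntegral.intervalIntegrable_rpow' (by linarith)).const_mul _).sub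
      (intervalIntegral.intervalIntegrable_rpow' (by linarith))).const_mul β |>.const_mul P
  have hdecomp : ∫ t in 0..ρ, β * t ^ (β - 1) * (h ρ - h t)
      = P * (α / (α + β) * ρ ^ (α + β)) + ∫ t in 0..ρ, err t := by
    rw [← integral_mul_rpow_sub_one_mul_sub hβ (by linarith) hρ.le,
      ← intervalIntegral.integral_const_mul, ← intervalIntegral.integral_add hmodel_int herr_int]
    simp only [err, add_sub_cancel]
  rw [hdecomp, mul_div_assoc, ← mul_assoc, add_sub_cancel_left, ← Real.norm_eq_abs]
  refine (intervalIntegral.norm_integral_le_of_norm_le hρ.le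
    (ae_of_all _ herr_le) hbound_int).trans_eq ?_
  rw [intervalIntegral.integral_const_mul, integral_mul_rpow_sub_one hβ,
    Real.rpow_add hρ, mul_assoc]

theorem tendsto_rpow_mul_integral_mul_rpow_sub_one_mul_sub {h : ℝ → ℝ} {α β P : ℝ}
    (hα : 0 < α) (hβ : 0 < β) (hm : Measurable h)
    (hh : Tendsto (fun t => t ^ (-α) * h t) (𝓝[>] 0) (𝓝 P)) :
    Tendsto (fun ρ => ρ ^ (-(α + β)) * ∫ t in 0..ρ, β * t ^ (β - 1) * (h ρ - h t))
      (𝓝[>] 0) (𝓝 (P * α / (α + β))) := by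
  rw [Metric.tendsto_nhdsWithin_nhds]
  intro ε hε
  obtain ⟨δ, hδ, hR⟩ := exists_abs_sub_mul_rpow_le_of_tendsto hh (by positivity : 0 < ε / 4)
  refine ⟨δ, hδ, fun ρ (hρ : 0 < ρ) hρδ => ?_⟩
  rw [Real.dist_0_eq_abs, abs_of_pos hρ] at hρδ
  have hbound := abs_integral_mul_rpow_sub_one_mul_sub_sub_le (β := β) hα hβ hm hρ
    fun t ht => hR t ⟨ht.1, ht.2.trans_lt hρδ⟩
  have hscale : 0 < ρ ^ (-(α + β)) := Real.rpow_pos_of_pos hρ _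
  have hinv : ρ ^ (-(α + β)) * ρ ^ (α + β) = 1 := by
    rw [← Real.rpow_add hρ, neg_add_cancel, Real.rpow_zero]
  calc dist (ρ ^ (-(α + β)) * ∫ t in 0..ρ, β * t ^ (β - 1) * (h ρ - h t)) (P * α / (α + β))
      = ρ ^ (-(α + β)) * |(∫ t in 0..ρ, β * t ^ (β - 1) * (h ρ - h t))
          - P * α / (α + β) * ρ ^ (α + β)| := by
        rw [Real.dist_eq, ← abs_of_pos hscale, ← abs_mul, abs_of_pos hscale]
        congr 1
        linear_combination P * α / (α + β) * hinv
    _ ≤ ρ ^ (-(α + β)) * (2 * (ε / 4) * ρ ^ (α + β)) := by gcongr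
    _ = ε / 2 := by rw [mul_left_comm, hinv]; ring
    _ < ε := half_lt_self hε

section

variable {E : Type*} [NormedAddCommGroup E] [MeasurableSpace E] {μ : Measure E} {g : E → ℝ}

lemma eventually_integrableOn_ball_of_tendsto {α P : ℝ} (hP : P ≠ 0)
    (hF : Tendsto (fun t => t ^ (-α) * ∫ ξ in ball 0 t, g ξ ∂μ) (𝓝[>] 0) (𝓝 P)) :
    ∀ᶠ t in 𝓝[>] 0, IntegrableOn g (ball 0 t) μ := by
  filter_upwards [hF.eventually_ne hP] with t ht
  by_contra hnot
  rw [integral_undef hnot, mul_zero] at ht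
  exact ht rfl

variable [OpensMeasurableSpace E]

lemma lintegral_ofReal_norm_rpow (ν : Measure E) {β : ℝ} (hβ : 0 < β) :
    ∫⁻ ξ, ENNReal.ofReal (‖ξ‖ ^ β) ∂ν
      = ∫⁻ t in Ioi 0, ν {ξ | t ≤ ‖ξ‖} * ENNReal.ofReal (β * t ^ (β - 1)) := by
  simp_rw [← integral_mul_rpow_sub_one hβ]
  refine lintegral_comp_eq_lintegral_meas_le_mul ν (f := fun ξ => ‖ξ‖)
    (ae_of_all _ fun ξ => norm_nonneg ξ) measurable_norm.aemeasurable
    (fun t _ => (intervalIntegral.intervalIntegrable_rpow' (by linarith)).const_mul β) ?_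
  filter_upwards [ae_restrict_mem measurableSet_Ioi] with t (ht : 0 < t)
  positivity

variable {ρ : ℝ}

lemma withDensity_restrict_ball_setOf_le_norm (hg : 0 ≤ g) (hint : IntegrableOn g (ball 0 ρ) μ)
    (t : ℝ) :
    (μ.restrict (ball 0 ρ)).withDensity (fun ξ => ENNReal.ofReal (g ξ)) {ξ | t ≤ ‖ξ‖}
      = (Iic ρ).indicator
          (fun t => ENNReal.ofReal (∫ ξ in ball 0 ρ, g ξ ∂μ - ∫ ξ in ball 0 t, g ξ ∂μ)) t := by
  have hmeas : MeasurableSet {ξ : E | t ≤ ‖ξ‖} :=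
    measurableSet_le measurable_const measurable_norm
  have hset : {ξ : E | t ≤ ‖ξ‖} ∩ ball 0 ρ = ball 0 ρ \ ball 0 t := by
    ext ξ
    simp [and_comm]
  rw [withDensity_apply _ hmeas, Measure.restrict_restrict hmeas, hset]
  by_cases htρ : t ≤ ρ
  · rw [indicator_of_mem (show t ∈ Iic ρ from htρ), ← ofReal_integral_eq_lintegral_ofReal
      (hint.mono_set sdiff_subset) (ae_of_all _ fun ξ => hg ξ),
      setIntegral_sdiff measurableSet_ball hint (ball_subset_ball htρ)]
  · rw [indicator_of_notMem (show t ∉ Iic ρ from htρ),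
      sdiff_eq_empty.2 (ball_subset_ball (not_le.1 htρ).le), Measure.restrict_empty,
      lintegral_zero_measure]

lemma ofReal_setIntegral_ball_norm_rpow_mul (hg : 0 ≤ g) (hgm : Measurable g) {β : ℝ}
    (hβ : 0 ≤ β) (hint : IntegrableOn g (ball 0 ρ) μ) :
    ENNReal.ofReal (∫ ξ in ball 0 ρ, ‖ξ‖ ^ β * g ξ ∂μ)
      = ∫⁻ ξ, ENNReal.ofReal (‖ξ‖ ^ β)
          ∂(μ.restrict (ball 0 ρ)).withDensity (fun ξ => ENNReal.ofReal (g ξ)) := by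
  rw [lintegral_withDensity_eq_lintegral_mul _ (by fun_prop) (by fun_prop),
    ofReal_integral_eq_lintegral_ofReal]
  · refine setLIntegral_congr_fun measurableSet_ball fun ξ _ => ?_
    rw [Pi.mul_apply, ← ENNReal.ofReal_mul (hg ξ), mul_comm]
  · refine hint.bdd_mul (measurable_norm.pow_const β).aestronglyMeasurable (c := ρ ^ β) ?_
    filter_upwards [ae_restrict_mem measurableSet_ball] with ξ hξ
    rw [Real.norm_of_nonneg (by positivity)]
    exact Real.rpow_le_rpow (norm_nonneg ξ) (mem_ball_zero_iff.1 hξ).le hβ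
  · exact ae_of_all _ fun ξ => mul_nonneg (by positivity) (hg ξ)

theorem setIntegral_ball_norm_rpow_mul (hg : 0 ≤ g) (hgm : Measurable g) {β : ℝ} (hβ : 0 < β)
    (hint : IntegrableOn g (ball 0 ρ) μ) :
    ∫ ξ in ball 0 ρ, ‖ξ‖ ^ β * g ξ ∂μ
      = ∫ t in 0..ρ, β * t ^ (β - 1) * (∫ ξ in ball 0 ρ, g ξ ∂μ - ∫ ξ in ball 0 t, g ξ ∂μ) := by
  rcases le_or_gt ρ 0 with hρ | hρ
  · simp only [(ball_eq_empty (x := (0 : E))).2 hρ, setIntegral_empty, zero_sub]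
    refine (intervalIntegral.integral_zero_ae (ae_of_all _ fun t ht => ?_)).symm
    rw [uIoc_of_ge hρ] at ht
    simp [(ball_eq_empty (x := (0 : E))).2 ht.2]
  set F : ℝ → ℝ := fun t => ∫ ξ in ball 0 t, g ξ ∂μ
  have hmono : MonotoneOn F (Ioc 0 ρ) := fun a _ b hb hab =>
    setIntegral_mono_set (hint.mono_set (ball_subset_ball hb.2)) (ae_of_all _ fun ξ => hg ξ)
      (ball_subset_ball hab).eventuallyLE
  have hnonneg : ∀ t ∈ Ioc 0 ρ, 0 ≤ β * t ^ (β - 1) * (F ρ - F t) := fun t ht =>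
    mul_nonneg (by have := ht.1; positivity) (sub_nonneg.2 (hmono ht (right_mem_Ioc.2 hρ) ht.2))
  have htail : ∀ t ∈ Ioi (0 : ℝ),
      (μ.restrict (ball 0 ρ)).withDensity (fun ξ => ENNReal.ofReal (g ξ)) {ξ | t ≤ ‖ξ‖}
        * ENNReal.ofReal (β * t ^ (β - 1))
      = (Ioc 0 ρ).indicator (fun t => ENNReal.ofReal (β * t ^ (β - 1) * (F ρ - F t))) t := by
    intro t (ht : 0 < t)
    rw [withDensity_restrict_ball_setOf_le_norm hg hint]
    by_cases htρ : t ≤ ρ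
    · rw [indicator_of_mem (show t ∈ Iic ρ from htρ),
        indicator_of_mem (show t ∈ Ioc 0 ρ from ⟨ht, htρ⟩), mul_comm,
        ← ENNReal.ofReal_mul (by positivity)]
    · rw [indicator_of_notMem (show t ∉ Iic ρ from htρ), indicator_of_notMem fun h => htρ h.2,
        zero_mul]
  calc ∫ ξ in ball 0 ρ, ‖ξ‖ ^ β * g ξ ∂μ
      = (ENNReal.ofReal (∫ ξ in ball 0 ρ, ‖ξ‖ ^ β * g ξ ∂μ)).toReal :=
        (ENNReal.toReal_ofReal (setIntegral_nonneg measurableSet_ball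
          fun ξ _ => mul_nonneg (by positivity) (hg ξ))).symm
    _ = (∫⁻ t in Ioc 0 ρ, ENNReal.ofReal (β * t ^ (β - 1) * (F ρ - F t))).toReal := by
        rw [ofReal_setIntegral_ball_norm_rpow_mul hg hgm hβ.le hint,
          lintegral_ofReal_norm_rpow _ hβ, setLIntegral_congr_fun measurableSet_Ioi htail,
          lintegral_indicator measurableSet_Ioc, Measure.restrict_restrict measurableSet_Ioc,
          inter_eq_left.2 Ioc_subset_Ioi_self]
    _ = _ := by
        rw [intervalIntegral.integral_of_le hρ.le, integral_eq_lintegral_of_nonneg_ae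
          ((ae_restrict_iff' measurableSet_Ioc).2 (ae_of_all _ hnonneg))]
        exact ((by fun_prop : Measurable fun t : ℝ => β * t ^ (β - 1)).aemeasurable.mul
          (aemeasurable_const.sub (aemeasurable_restrict_of_monotoneOn measurableSet_Ioc
            hmono))).aestronglyMeasurable

lemma measurable_setIntegral_ball [SFinite μ] (hgm : Measurable g) :
    Measurable fun t : ℝ => ∫ ξ in ball 0 t, g ξ ∂μ := by
  have hind : Function.uncurry (fun (t : ℝ) (ξ : E) => (ball (0 : E) t).indicator g ξ)
      = {p : ℝ × E | ‖p.2‖ < p.1}.indicator (g ∘ Prod.snd) := by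
    ext ⟨t, ξ⟩
    by_cases h : ‖ξ‖ < t <;> simp [h]
  have hmeas : StronglyMeasurable
      (Function.uncurry fun (t : ℝ) (ξ : E) => (ball (0 : E) t).indicator g ξ) :=
    hind ▸ ((hgm.comp measurable_snd).indicator
      (measurableSet_lt measurable_snd.norm measurable_fst)).stronglyMeasurable
  simpa only [integral_indicator measurableSet_ball] using hmeas.integral_prod_right.measurable

theorem tendsto_rpow_mul_setIntegral_ball_norm_rpow_mul [SFinite μ] (hg : 0 ≤ g)
    (hgm : Measurable g) {α β P : ℝ} (hα : 0 < α) (hβ : 0 < β) (hP : P ≠ 0)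
    (hF : Tendsto (fun t => t ^ (-α) * ∫ ξ in ball 0 t, g ξ ∂μ) (𝓝[>] 0) (𝓝 P)) :
    Tendsto (fun ρ => ρ ^ (-(α + β)) * ∫ ξ in ball 0 ρ, ‖ξ‖ ^ β * g ξ ∂μ)
      (𝓝[>] 0) (𝓝 (P * α / (α + β))) := by
  refine (tendsto_rpow_mul_integral_mul_rpow_sub_one_mul_sub hα hβ
    (measurable_setIntegral_ball hgm) hF).congr' ?_
  filter_upwards [eventually_integrableOn_ball_of_tendsto hP hF] with ρ hρ
  rw [setIntegral_ball_norm_rpow_mul hg hgm hβ hρ]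

end

lemma stronglyMeasurable_fourier {V F : Type*} [NormedAddCommGroup V] [InnerProductSpace ℝ V]
    [MeasurableSpace V] [BorelSpace V] [FiniteDimensional ℝ V] [NormedAddCommGroup F]
    [NormedSpace ℂ F] (f : V → F) :
    StronglyMeasurable (𝓕 f) := by
  by_cases hf : Integrable f
  · exact (VectorFourier.fourierIntegral_continuous Real.continuous_fourierChar
      continuous_inner hf).stronglyMeasurable
  · have : 𝓕 f = 0 :=
      funext fun w => integral_undef fun h => hf ((Real.fourierIntegral_convergent_iff w).1 h)
    exact this ▸ stronglyMeasurable_const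

theorem decay_character_shift_general
    (n : ℕ) (s : ℝ) (hs : 0 < s)
    (u₀ : EuclideanSpace ℝ (Fin n) → ℂ)
    (r : ℝ)
    (hchar : HasDecayCharacter n u₀ 0 r) :
    HasDecayCharacter n u₀ s (s + r) := by
  obtain ⟨hr, P, hP, hlim⟩ := hchar
  have hα : 0 < 2 * r + n := by linarith
  have hF : Tendsto (fun t => t ^ (-(2 * r + n)) * ∫ ξ in ball 0 t, ‖𝓕 u₀ ξ‖ ^ 2)
      (𝓝[>] 0) (𝓝 P) := by
    refine hlim.congr fun t => ?_
    simp only [decayIndicator, mul_zero, Real.rpow_zero, one_mul]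
    ring_nf
  have hlimit := tendsto_rpow_mul_setIntegral_ball_norm_rpow_mul (fun ξ => by positivity)
    ((stronglyMeasurable_fourier u₀).measurable.norm.pow_const 2) hα (by positivity : 0 < 2 * s)
    hP.ne' hF
  refine ⟨by linarith, _, by positivity, hlimit.congr fun ρ => ?_⟩
  simp only [decayIndicator]
  ring_nf

/-- For `u₀ ∈ H^s(ℝⁿ)`, `s > 0`: if the decay character `r*(u₀)` satisfies
`-n/2 < r*(u₀) < ∞` then the decay character of `Λ^s u₀` satisfies
`-n/2 + s < r*_s(u₀) < ∞` and `r*_s(u₀) = s + r*(u₀)`. -/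
theorem decay_character_shift
    (n : ℕ) (s : ℝ) (hs : 0 < s)
    (u₀ : EuclideanSpace ℝ (Fin n) → ℂ)
    (hu₀ : MemLp u₀ 2)
    (hHs : Integrable (fun ξ : EuclideanSpace ℝ (Fin n) => ‖ξ‖ ^ (2 * s) * ‖𝓕 u₀ ξ‖ ^ 2))
    (r : ℝ) (hr : -(n : ℝ) / 2 < r)
    (hchar : HasDecayCharacter n u₀ 0 r) :
    HasDecayCharacter n u₀ s (s + r) :=
  decay_character_shift_general n s hs u₀ r hchar
end

section
/- Lower bound for linear decay: let v₀ ∈ L²(ℝⁿ) with P_{r}(v₀) > 0 for some r > -n/2 (i.e., there exist ρ₀, C₁ > 0 with C₁ ≤ ρ^{-2r-n} ∫_{B(ρ)} |v̂₀|² dξ for 0 < ρ ≤ ρ₀). Let v(t) have Fourier transform v̂(ξ,t) = e^{tM(ξ)} v̂₀(ξ) where |e^{tM(ξ)}w| ≥ C e^{-c|ξ|^{2α}t}|w|, 0 < α ≤ 1. Then there exists C' > 0 such that ‖v(t)‖²_{L²} ≥ C' (1+t)^{-(n/2 + r)/α} for all t ≥ 0. -/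
open MeasureTheory Filter Metric
open scoped Topology

/-!
On the shrinking ball `B(ρ(t))`, `ρ(t) = ρ₀ (1+t)^{-1/(2α)}`, the exponent `c |ξ|^{2α} t` stays
below `c ρ₀^{2α}`, so there `|v̂(ξ,t)|² ≥ K |v̂₀(ξ)|²` with `K = (C e^{-c ρ₀^{2α}})²` independent
of `t`. The decay indicator bounds `∫_{B(ρ(t))} |v̂₀|²` below by `C₁ ρ(t)^{2r+n}`, which is
`C₁ ρ₀^{2r+n} (1+t)^{-(n/2+r)/α}`.
-/

lemma mul_setIntegral_le_integral_of_le_on {X : Type*} [MeasurableSpace X] {μ : Measure X}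
    {f g : X → ℝ} {s : Set X} {K : ℝ} (hs : MeasurableSet s) (hK : 0 ≤ K) (hf : 0 ≤ f)
    (hg : 0 ≤ g) (hg_int : Integrable g μ) (hfg : ∀ x ∈ s, K * f x ≤ g x) :
    K * ∫ x in s, f x ∂μ ≤ ∫ x, g x ∂μ :=
  calc K * ∫ x in s, f x ∂μ = ∫ x in s, K * f x ∂μ := (integral_const_mul K f).symm
    _ ≤ ∫ x in s, g x ∂μ :=
      integral_mono_of_nonneg (ae_of_all _ fun x => mul_nonneg hK (hf x)) hg_int.integrableOn
        (ae_restrict_of_forall_mem hs hfg)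
    _ ≤ ∫ x, g x ∂μ := setIntegral_le_integral hg_int (ae_of_all _ hg)

lemma mul_rpow_le_of_le_rpow_neg_mul {ρ s C I : ℝ} (hρ : 0 < ρ) (h : C ≤ ρ ^ (-s) * I) :
    C * ρ ^ s ≤ I := by
  have hρs : 0 < ρ ^ s := Real.rpow_pos_of_pos hρ s
  rwa [Real.rpow_neg hρ.le, le_inv_mul_iff₀ hρs, mul_comm] at h

noncomputable def decayRadius (ρ₀ α t : ℝ) : ℝ := ρ₀ * (1 + t) ^ (-(1 / (2 * α)))

section decayRadius

variable {ρ₀ α t : ℝ}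

lemma decayRadius_pos (hρ₀ : 0 < ρ₀) (ht : 0 ≤ t) : 0 < decayRadius ρ₀ α t :=
  mul_pos hρ₀ (Real.rpow_pos_of_pos (by linarith) _)

lemma decayRadius_le (hρ₀ : 0 < ρ₀) (hα : 0 < α) (ht : 0 ≤ t) : decayRadius ρ₀ α t ≤ ρ₀ :=
  mul_le_of_le_one_right hρ₀.le <|
    Real.rpow_le_one_of_one_le_of_nonpos (by linarith) (neg_nonpos.mpr (by positivity))

lemma decayRadius_rpow (hρ₀ : 0 < ρ₀) (ht : 0 ≤ t) (p : ℝ) :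
    decayRadius ρ₀ α t ^ p = ρ₀ ^ p * (1 + t) ^ (-p / (2 * α)) := by
  have h1t : 0 ≤ 1 + t := by linarith
  rw [decayRadius, Real.mul_rpow hρ₀.le (Real.rpow_nonneg h1t _), ← Real.rpow_mul h1t]
  congr 2
  ring

lemma decayRadius_rpow_mul_le (hρ₀ : 0 < ρ₀) (hα : 0 < α) (ht : 0 ≤ t) :
    decayRadius ρ₀ α t ^ (2 * α) * t ≤ ρ₀ ^ (2 * α) := by
  have h1t : 0 < 1 + t := by linarith
  rw [decayRadius_rpow hρ₀ ht, neg_div, div_self (by positivity), Real.rpow_neg_one, mul_assoc]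
  exact mul_le_of_le_one_right (by positivity) ((inv_mul_le_iff₀ h1t).2 (by linarith))

lemma exp_neg_le_exp_of_norm_lt_decayRadius {E : Type*} [SeminormedAddCommGroup E] {c : ℝ}
    {ξ : E} (hρ₀ : 0 < ρ₀) (hα : 0 < α) (hc : 0 ≤ c) (ht : 0 ≤ t)
    (hξ : ‖ξ‖ < decayRadius ρ₀ α t) :
    Real.exp (-(c * ρ₀ ^ (2 * α))) ≤ Real.exp (-c * ‖ξ‖ ^ (2 * α) * t) := by
  have hξα : ‖ξ‖ ^ (2 * α) ≤ decayRadius ρ₀ α t ^ (2 * α) :=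
    Real.rpow_le_rpow (norm_nonneg ξ) hξ.le (by positivity)
  have : ‖ξ‖ ^ (2 * α) * t ≤ ρ₀ ^ (2 * α) :=
    (mul_le_mul_of_nonneg_right hξα ht).trans (decayRadius_rpow_mul_le hρ₀ hα ht)
  rw [Real.exp_le_exp, neg_mul, neg_mul, mul_assoc, neg_le_neg_iff]
  exact mul_le_mul_of_nonneg_left this hc

end decayRadius

theorem linear_decay_lower_bound_general
    (n : ℕ) (α c C r : ℝ) (hα : 0 < α) (hc : 0 < c) (hC : 0 < C)
    (v₀hat : EuclideanSpace ℝ (Fin n) → EuclideanSpace ℝ (Fin n))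
    (ρ₀ C₁ : ℝ) (hρ₀ : 0 < ρ₀) (hC₁ : 0 < C₁)
    (hlow : ∀ ρ : ℝ, 0 < ρ → ρ ≤ ρ₀ →
      C₁ ≤ ρ ^ (-2 * r - n) *
        ∫ ξ in ball (0 : EuclideanSpace ℝ (Fin n)) ρ, ‖v₀hat ξ‖ ^ 2)
    (Fhat : ℝ → EuclideanSpace ℝ (Fin n) → EuclideanSpace ℝ (Fin n))
    (hsg : ∀ t : ℝ, 0 ≤ t → ∀ ξ : EuclideanSpace ℝ (Fin n),
      C * Real.exp (-c * ‖ξ‖ ^ (2 * α) * t) * ‖v₀hat ξ‖ ≤ ‖Fhat t ξ‖)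
    (hL2 : ∀ t : ℝ, 0 ≤ t → Integrable (fun ξ : EuclideanSpace ℝ (Fin n) => ‖Fhat t ξ‖ ^ 2)) :
    ∃ C' : ℝ, 0 < C' ∧ ∀ t : ℝ, 0 ≤ t →
      C' * (1 + t) ^ (-((n : ℝ) / 2 + r) / α) ≤ ∫ ξ, ‖Fhat t ξ‖ ^ 2 := by
  set K := C * Real.exp (-(c * ρ₀ ^ (2 * α)))
  refine ⟨K ^ 2 * C₁ * ρ₀ ^ (2 * r + n), by positivity, fun t ht => ?_⟩
  set ρ := decayRadius ρ₀ α t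
  have hρ : 0 < ρ := decayRadius_pos hρ₀ ht
  have hball : C₁ * ρ ^ (2 * r + n) ≤ ∫ ξ in ball 0 ρ, ‖v₀hat ξ‖ ^ 2 := by
    refine mul_rpow_le_of_le_rpow_neg_mul hρ ?_
    simpa only [neg_add', neg_mul] using hlow ρ hρ (decayRadius_le hρ₀ hα ht)
  have hpt : ∀ ξ ∈ ball (0 : EuclideanSpace ℝ (Fin n)) ρ,
      K ^ 2 * ‖v₀hat ξ‖ ^ 2 ≤ ‖Fhat t ξ‖ ^ 2 := fun ξ hξ => by
    rw [← mul_pow]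
    refine pow_le_pow_left₀ (by positivity) ((?_ : _ ≤ _).trans (hsg t ht ξ)) 2
    exact mul_le_mul_of_nonneg_right (mul_le_mul_of_nonneg_left
      (exp_neg_le_exp_of_norm_lt_decayRadius hρ₀ hα hc.le ht (mem_ball_zero_iff.1 hξ)) hC.le)
      (norm_nonneg _)
  calc K ^ 2 * C₁ * ρ₀ ^ (2 * r + n) * (1 + t) ^ (-((n : ℝ) / 2 + r) / α)
      = K ^ 2 * (C₁ * ρ ^ (2 * r + n)) := by
        rw [decayRadius_rpow hρ₀ ht, show -(2 * r + n) / (2 * α) = -((n : ℝ) / 2 + r) / α by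
          field_simp; ring]
        ring
    _ ≤ K ^ 2 * ∫ ξ in ball 0 ρ, ‖v₀hat ξ‖ ^ 2 := by gcongr
    _ ≤ ∫ ξ, ‖Fhat t ξ‖ ^ 2 :=
      mul_setIntegral_le_integral_of_le_on measurableSet_ball (sq_nonneg K)
        (fun ξ => sq_nonneg _) (fun ξ => sq_nonneg _)
        (hL2 t ht) hpt

/-- Lower bound for linear decay. If `v₀ ∈ L²(ℝⁿ)` has `P_r(v₀) > 0` for some
`r > -n/2` (there are `ρ₀, C₁ > 0` with `C₁ ≤ ρ^{-2r-n} ∫_{B(ρ)} |v̂₀|² dξ` for `0 < ρ ≤ ρ₀`),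
and `v̂(ξ,t) = e^{tM(ξ)} v̂₀(ξ)` satisfies `|v̂(ξ,t)| ≥ C e^{-c|ξ|^{2α}t}|v̂₀(ξ)|` with
`0 < α ≤ 1`, then there is `C' > 0` with
`‖v(t)‖²_{L²} = ∫ |v̂(ξ,t)|² dξ ≥ C'(1+t)^{-(n/2+r)/α}` for all `t ≥ 0`. -/
theorem linear_decay_lower_bound
    (n : ℕ) (α c C r : ℝ) (hα : 0 < α) (hα1 : α ≤ 1) (hc : 0 < c) (hC : 0 < C)
    (hr : -(n : ℝ) / 2 < r)
    (v₀hat : EuclideanSpace ℝ (Fin n) → EuclideanSpace ℝ (Fin n))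
    (hv₀ : MemLp v₀hat 2)
    (ρ₀ C₁ : ℝ) (hρ₀ : 0 < ρ₀) (hC₁ : 0 < C₁)
    (hlow : ∀ ρ : ℝ, 0 < ρ → ρ ≤ ρ₀ →
      C₁ ≤ ρ ^ (-2 * r - n) *
        ∫ ξ in ball (0 : EuclideanSpace ℝ (Fin n)) ρ, ‖v₀hat ξ‖ ^ 2)
    (Fhat : ℝ → EuclideanSpace ℝ (Fin n) → EuclideanSpace ℝ (Fin n))
    (hsg : ∀ t : ℝ, 0 ≤ t → ∀ ξ : EuclideanSpace ℝ (Fin n),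
      C * Real.exp (-c * ‖ξ‖ ^ (2 * α) * t) * ‖v₀hat ξ‖ ≤ ‖Fhat t ξ‖)
    (hL2 : ∀ t : ℝ, 0 ≤ t → Integrable (fun ξ : EuclideanSpace ℝ (Fin n) => ‖Fhat t ξ‖ ^ 2)) :
    ∃ C' : ℝ, 0 < C' ∧ ∀ t : ℝ, 0 ≤ t →
      C' * (1 + t) ^ (-((n : ℝ) / 2 + r) / α) ≤ ∫ ξ, ‖Fhat t ξ‖ ^ 2 :=
  linear_decay_lower_bound_general n α c C r hα hc hC v₀hat ρ₀ C₁ hρ₀ hC₁ hlow Fhat hsg hL2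
end

section
/- Upper bound for linear decay via Fourier splitting: let v : [0,∞) → L²(ℝⁿ) satisfy d/dt ‖v(t)‖²_{L²} ≤ -C ∫ |ξ|^{2α}|v̂(ξ,t)|² dξ and |v̂(ξ,t)| ≤ C |v̂₀(ξ)| for ξ in small balls, and suppose ρ^{-2r-n} ∫_{B(ρ)}|v̂₀|² dξ ≤ C₀ for all 0 < ρ ≤ ρ₀ (i.e., P_r(v₀) < ∞). Then with ρ(t) = m^{1/(2α)}(1+t)^{-1/(2α)} and m > r + n/2, one obtains ‖v(t)‖²_{L²} ≤ C (1+t)^{-(n/2 + r)/α}. -/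
/-!
Splitting frequency space at radius `ρ`, the dissipation `∫ |ξ|^{2α} |v̂|²` controls
`ρ^{2α}` times the energy outside the ball `B(ρ)`, while the energy inside `B(ρ)` is at most
`C² C₀ ρ^{2r+n}` by the pointwise bound and `P_r(v₀) < ∞`. Hence
`E' + C ρ^{2α} E ≤ C³ C₀ ρ^{2α+2r+n}` for every small `ρ`. Letting the radius shrink in time so
that `C ρ(t)^{2α} = m / (T + t)`, with `m = (n/2 + r)/α + 1`, turns this into
`((T + t)^m E)' ≤ const`, so `(T + t)^m E(t)` grows at most linearly and
`E(t) ≲ (1 + t)^{1-m} = (1 + t)^{-(n/2+r)/α}`.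
-/

open MeasureTheory Metric

section FourierSplitting

variable {V W : Type*} [SeminormedAddCommGroup V] [MeasurableSpace V] [OpensMeasurableSpace V]
  [SeminormedAddCommGroup W] {μ : Measure V}

theorem rpow_mul_integral_sub_setIntegral_ball_le {g : V → ℝ} {p ρ : ℝ} (hp : 0 ≤ p)
    (hρ : 0 ≤ ρ) (hg : Integrable g μ) (hg₀ : 0 ≤ g)
    (hpg : Integrable (fun ξ => ‖ξ‖ ^ p * g ξ) μ) :
    ρ ^ p * (∫ ξ, g ξ ∂μ - ∫ ξ in ball 0 ρ, g ξ ∂μ) ≤ ∫ ξ, ‖ξ‖ ^ p * g ξ ∂μ := by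
  have hcompl : ∫ ξ, g ξ ∂μ - ∫ ξ in ball 0 ρ, g ξ ∂μ = ∫ ξ in (ball 0 ρ)ᶜ, g ξ ∂μ := by
    rw [← integral_add_compl measurableSet_ball hg, add_sub_cancel_left]
  rw [hcompl, ← integral_const_mul]
  calc ∫ ξ in (ball 0 ρ)ᶜ, ρ ^ p * g ξ ∂μ ≤ ∫ ξ in (ball 0 ρ)ᶜ, ‖ξ‖ ^ p * g ξ ∂μ := by
        refine setIntegral_mono_on (hg.const_mul _).integrableOn hpg.integrableOn
          measurableSet_ball.compl fun ξ hξ => ?_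
        have hρξ : ρ ≤ ‖ξ‖ := by simpa using hξ
        gcongr
        exact hg₀ ξ
    _ ≤ ∫ ξ, ‖ξ‖ ^ p * g ξ ∂μ :=
        setIntegral_le_integral hpg (.of_forall fun ξ => mul_nonneg (by positivity) (hg₀ ξ))

theorem fourier_splitting {F v : V → W} {p κ C ρ e' : ℝ} (hp : 0 ≤ p) (hκ : 0 ≤ κ)
    (hρ : 0 ≤ ρ) (hF : Integrable (fun ξ => ‖F ξ‖ ^ 2) μ)
    (hv : IntegrableOn (fun ξ => ‖v ξ‖ ^ 2) (ball 0 ρ) μ)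
    (hpF : Integrable (fun ξ => ‖ξ‖ ^ p * ‖F ξ‖ ^ 2) μ)
    (he' : e' ≤ -κ * ∫ ξ, ‖ξ‖ ^ p * ‖F ξ‖ ^ 2 ∂μ)
    (hFv : ∀ ξ ∈ ball (0 : V) ρ, ‖F ξ‖ ≤ C * ‖v ξ‖) :
    e' + κ * ρ ^ p * ∫ ξ, ‖F ξ‖ ^ 2 ∂μ ≤ κ * ρ ^ p * (C ^ 2 * ∫ ξ in ball 0 ρ, ‖v ξ‖ ^ 2 ∂μ) := by
  have hsplit := rpow_mul_integral_sub_setIntegral_ball_le hp hρ hF (fun ξ => by positivity) hpF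
  have hball : ∫ ξ in ball 0 ρ, ‖F ξ‖ ^ 2 ∂μ ≤ C ^ 2 * ∫ ξ in ball 0 ρ, ‖v ξ‖ ^ 2 ∂μ := by
    rw [← integral_const_mul]
    refine setIntegral_mono_on hF.integrableOn (hv.const_mul _) measurableSet_ball
      fun ξ hξ => ?_
    rw [← mul_pow]
    exact pow_le_pow_left₀ (norm_nonneg _) (hFv ξ hξ) 2
  have hκρ : 0 ≤ κ * ρ ^ p := by positivity
  nlinarith [mul_le_mul_of_nonneg_left hball hκρ]

end FourierSplitting

theorem le_mul_rpow_of_rpow_neg_mul_le {ρ q I c : ℝ} (hρ : 0 < ρ) (h : ρ ^ (-q) * I ≤ c) :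
    I ≤ c * ρ ^ q := by
  rwa [Real.rpow_neg hρ.le, inv_mul_le_iff₀ (by positivity), mul_comm] at h

/-- Choosing the radius with `κ ρ^p = m / s` in the Fourier splitting inequality. -/
theorem add_div_mul_le_of_forall_radius {e e' κ B ρ₀ p m s : ℝ} (hκ : 0 < κ) (hp : 0 < p)
    (hm : 0 < m) (hρ₀ : 0 < ρ₀) (hs : m / (κ * ρ₀ ^ p) ≤ s)
    (h : ∀ ρ, 0 < ρ → ρ ≤ ρ₀ → e' + κ * ρ ^ p * e ≤ B * ρ ^ (p * m)) :
    e' + m / s * e ≤ B * (m / κ) ^ m / s ^ m := by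
  have hs₀ : 0 < s := lt_of_lt_of_le (by positivity) hs
  set x := m / (κ * s) with hx
  have hx₀ : 0 < x := by positivity
  set ρ := x ^ p⁻¹
  have hρp : ρ ^ p = x := Real.rpow_inv_rpow hx₀.le hp.ne'
  have hρρ₀ : ρ ≤ ρ₀ := by
    rw [← Real.rpow_le_rpow_iff (by positivity) hρ₀.le hp, hρp, hx,
      div_le_iff₀ (by positivity)]
    rw [div_le_iff₀ (by positivity)] at hs
    linarith
  have hκx : κ * x = m / s := by rw [hx]; field_simp
  have hxm : x ^ m = (m / κ) ^ m / s ^ m := by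
    rw [hx, ← div_div, Real.div_rpow (by positivity) hs₀.le]
  have := h ρ (by positivity) hρρ₀
  rwa [Real.rpow_mul (by positivity), hρp, mul_assoc, ← mul_assoc κ, hκx, hxm,
    ← mul_div_assoc] at this

theorem rpow_mul_le_add_mul_of_hasDerivAt {E E' : ℝ → ℝ} {T m A : ℝ} (hT : 0 < T)
    (hE : ∀ t, 0 ≤ t → HasDerivAt E (E' t) t)
    (h : ∀ t, 0 ≤ t → E' t + m / (T + t) * E t ≤ A / (T + t) ^ m) :
    ∀ t, 0 ≤ t → (T + t) ^ m * E t ≤ T ^ m * E 0 + A * t := by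
  intro t ht
  have hweighted : ∀ τ, 0 ≤ τ → HasDerivAt (fun τ => (T + τ) ^ m * E τ)
      ((T + τ) ^ m * (E' τ + m / (T + τ) * E τ)) τ := by
    intro τ hτ
    have hTτ : 0 < T + τ := by linarith
    have hpow : HasDerivAt (fun τ => (T + τ) ^ m) (m * (T + τ) ^ (m - 1)) τ := by
      simpa [Function.comp_def] using (Real.hasDerivAt_rpow_const (Or.inl hTτ.ne')).comp τ
        ((hasDerivAt_id τ).const_add T)
    refine (hpow.mul (hE τ hτ)).congr_deriv ?_
    rw [Real.rpow_sub_one hTτ.ne']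
    field_simp
    ring
  have hderiv_le : ∀ τ ∈ interior (Set.Ici (0 : ℝ)), deriv (fun τ => (T + τ) ^ m * E τ) τ ≤ A := by
    intro τ hτ
    rw [interior_Ici, Set.mem_Ioi] at hτ
    have hTτ : 0 < T + τ := by linarith
    rw [(hweighted τ hτ.le).deriv, ← le_div_iff₀' (by positivity)]
    exact h τ hτ.le
  have hmono := (convex_Ici (0 : ℝ)).image_sub_le_mul_sub_of_deriv_le
    (fun τ hτ => (hweighted τ hτ).continuousAt.continuousWithinAt)
    (fun τ hτ => (hweighted τ (interior_subset hτ)).differentiableAt.differentiableWithinAt)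
    hderiv_le 0 Set.self_mem_Ici t ht ht
  simp only [add_zero, sub_zero] at hmono
  linarith

theorem le_mul_one_add_rpow_of_rpow_mul_le {e t T m a b : ℝ} (hT : 1 ≤ T) (hm : 1 ≤ m)
    (ht : 0 ≤ t) (ha : 0 ≤ a) (hb : 0 ≤ b) (h : (T + t) ^ m * e ≤ a + b * t) :
    e ≤ (a + b) * (1 + t) ^ (1 - m) := by
  have hTt : 0 < T + t := by linarith
  have hlin : a + b * t ≤ (a + b) * (T + t) := by nlinarith
  calc e ≤ (a + b) * (T + t) / (T + t) ^ m := by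
        rw [le_div_iff₀ (by positivity)]; linarith
    _ = (a + b) * (T + t) ^ (1 - m) := by rw [Real.rpow_sub hTt, Real.rpow_one, mul_div_assoc]
    _ ≤ (a + b) * (1 + t) ^ (1 - m) := mul_le_mul_of_nonneg_left
        (Real.rpow_le_rpow_of_nonpos (by linarith) (by linarith) (by linarith)) (by linarith)

theorem linear_decay_upper_bound_fourier_splitting_general
    (n : ℕ) (α C C₀ r ρ₀ : ℝ) (hα : 0 < α) (hC : 0 < C) (hC₀ : 0 < C₀)
    (hρ₀ : 0 < ρ₀) (hr : -(n : ℝ) / 2 < r)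
    (v₀hat : EuclideanSpace ℝ (Fin n) → EuclideanSpace ℝ (Fin n))
    (hv₀ : MemLp v₀hat 2)
    (Fhat : ℝ → EuclideanSpace ℝ (Fin n) → EuclideanSpace ℝ (Fin n))
    (hL2 : ∀ t : ℝ, 0 ≤ t → Integrable (fun ξ : EuclideanSpace ℝ (Fin n) => ‖Fhat t ξ‖ ^ 2))
    (hdiss : ∀ t : ℝ, 0 ≤ t →
      Integrable (fun ξ : EuclideanSpace ℝ (Fin n) => ‖ξ‖ ^ (2 * α) * ‖Fhat t ξ‖ ^ 2))
    (E' : ℝ → ℝ)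
    (hE : ∀ t : ℝ, 0 ≤ t → HasDerivAt (fun τ => ∫ ξ, ‖Fhat τ ξ‖ ^ 2) (E' t) t)
    (hE' : ∀ t : ℝ, 0 ≤ t →
      E' t ≤ -C * ∫ ξ, ‖ξ‖ ^ (2 * α) * ‖Fhat t ξ‖ ^ 2)
    (hpt : ∀ t : ℝ, 0 ≤ t → ∀ ξ : EuclideanSpace ℝ (Fin n), ‖Fhat t ξ‖ ≤ C * ‖v₀hat ξ‖)
    (hP : ∀ ρ : ℝ, 0 < ρ → ρ ≤ ρ₀ →
      ρ ^ (-2 * r - n) *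
          (∫ ξ in ball (0 : EuclideanSpace ℝ (Fin n)) ρ, ‖v₀hat ξ‖ ^ 2) ≤ C₀) :
    ∃ C' : ℝ, 0 < C' ∧ ∀ t : ℝ, 0 ≤ t →
      (∫ ξ, ‖Fhat t ξ‖ ^ 2) ≤ C' * (1 + t) ^ (-((n : ℝ) / 2 + r) / α) := by
  set m : ℝ := ((n : ℝ) / 2 + r) / α + 1 with hm
  have hm1 : 1 ≤ m := by linarith [div_pos (by linarith : 0 < (n : ℝ) / 2 + r) hα]
  set T : ℝ := max 1 (m / (C * ρ₀ ^ (2 * α)))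
  set A : ℝ := C ^ 3 * C₀ * (m / C) ^ m
  have hv₀sq : Integrable (fun ξ => ‖v₀hat ξ‖ ^ 2) := hv₀.integrable_norm_pow two_ne_zero
  have hsplit : ∀ t, 0 ≤ t → ∀ ρ, 0 < ρ → ρ ≤ ρ₀ →
      E' t + C * ρ ^ (2 * α) * ∫ ξ, ‖Fhat t ξ‖ ^ 2 ≤ C ^ 3 * C₀ * ρ ^ (2 * α * m) := by
    intro t ht ρ hρ hρρ₀
    have hball : ∫ ξ in ball 0 ρ, ‖v₀hat ξ‖ ^ 2 ≤ C₀ * ρ ^ (2 * r + n) :=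
      le_mul_rpow_of_rpow_neg_mul_le hρ (by convert hP ρ hρ hρρ₀ using 3; ring)
    calc _ ≤ C * ρ ^ (2 * α) * (C ^ 2 * ∫ ξ in ball 0 ρ, ‖v₀hat ξ‖ ^ 2) :=
          fourier_splitting (by positivity) hC.le hρ.le (hL2 t ht) hv₀sq.integrableOn
            (hdiss t ht) (hE' t ht) fun ξ _ => hpt t ht ξ
      _ ≤ C * ρ ^ (2 * α) * (C ^ 2 * (C₀ * ρ ^ (2 * r + n))) := by gcongr
      _ = C ^ 3 * C₀ * ρ ^ (2 * α * m) := by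
          rw [show 2 * α * m = 2 * α + (2 * r + n) by rw [hm]; field_simp; ring,
            Real.rpow_add hρ (2 * α)]
          ring
  have hgrow := rpow_mul_le_add_mul_of_hasDerivAt (T := T) (by positivity) hE fun t ht =>
    add_div_mul_le_of_forall_radius hC (by positivity) (by positivity) hρ₀
      (by linarith [le_max_right 1 (m / (C * ρ₀ ^ (2 * α)))]) (hsplit t ht)
  refine ⟨T ^ m * (∫ ξ, ‖Fhat 0 ξ‖ ^ 2) + A, by positivity, fun t ht => ?_⟩
  convert le_mul_one_add_rpow_of_rpow_mul_le (le_max_left _ _) hm1 ht (by positivity)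
    (by positivity) (hgrow t ht) using 3
  rw [hm]
  ring

/-- Upper bound for linear decay via Fourier splitting. Suppose the energy
`E t = ∫ |v̂(ξ,t)|² dξ` (`= ‖v(t)‖²_{L²}` by Plancherel) satisfies
`E'(t) ≤ -C ∫ |ξ|^{2α}|v̂(ξ,t)|² dξ`, that `|v̂(ξ,t)| ≤ C|v̂₀(ξ)|`, and that
`ρ^{-2r-n} ∫_{B(ρ)} |v̂₀|² dξ ≤ C₀` for `0 < ρ ≤ ρ₀` (i.e. `P_r(v₀) < ∞`). Then
`E t ≤ C'(1+t)^{-(n/2+r)/α}` for some `C' > 0` and all `t ≥ 0`. -/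
theorem linear_decay_upper_bound_fourier_splitting
    (n : ℕ) (α C C₀ r ρ₀ : ℝ) (hα : 0 < α) (hα1 : α ≤ 1) (hC : 0 < C) (hC₀ : 0 < C₀)
    (hρ₀ : 0 < ρ₀) (hr : -(n : ℝ) / 2 < r)
    (v₀hat : EuclideanSpace ℝ (Fin n) → EuclideanSpace ℝ (Fin n))
    (hv₀ : MemLp v₀hat 2)
    (Fhat : ℝ → EuclideanSpace ℝ (Fin n) → EuclideanSpace ℝ (Fin n))
    (hL2 : ∀ t : ℝ, 0 ≤ t → Integrable (fun ξ : EuclideanSpace ℝ (Fin n) => ‖Fhat t ξ‖ ^ 2))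
    (hdiss : ∀ t : ℝ, 0 ≤ t →
      Integrable (fun ξ : EuclideanSpace ℝ (Fin n) => ‖ξ‖ ^ (2 * α) * ‖Fhat t ξ‖ ^ 2))
    (E' : ℝ → ℝ)
    (hE : ∀ t : ℝ, 0 ≤ t → HasDerivAt (fun τ => ∫ ξ, ‖Fhat τ ξ‖ ^ 2) (E' t) t)
    (hE' : ∀ t : ℝ, 0 ≤ t →
      E' t ≤ -C * ∫ ξ, ‖ξ‖ ^ (2 * α) * ‖Fhat t ξ‖ ^ 2)
    (hpt : ∀ t : ℝ, 0 ≤ t → ∀ ξ : EuclideanSpace ℝ (Fin n), ‖Fhat t ξ‖ ≤ C * ‖v₀hat ξ‖)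
    (hP : ∀ ρ : ℝ, 0 < ρ → ρ ≤ ρ₀ →
      ρ ^ (-2 * r - n) *
          (∫ ξ in ball (0 : EuclideanSpace ℝ (Fin n)) ρ, ‖v₀hat ξ‖ ^ 2) ≤ C₀) :
    ∃ C' : ℝ, 0 < C' ∧ ∀ t : ℝ, 0 ≤ t →
      (∫ ξ, ‖Fhat t ξ‖ ^ 2) ≤ C' * (1 + t) ^ (-((n : ℝ) / 2 + r) / α) :=
  linear_decay_upper_bound_fourier_splitting_general n α C C₀ r ρ₀ hα hC hC₀ hρ₀ hr v₀hat hv₀ Fhat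
    hL2 hdiss E' hE hE' hpt hP
end

section
/- Low-frequency bound for the compressible model's Duhamel term: let G(ξ,s) satisfy |G(ξ,s)| ≤ C|ξ| ‖u(s)‖²_{L²} and suppose ‖u(s)‖²_{L²} ≤ C(1+s)^{-β} with 0 ≤ β < 1, and |e^{(t-s)M(ξ)}| ≤ e^{-c(t-s)|ξ|²}. Then ∫_{B(g(t))} |∫₀ᵗ e^{(t-s)M(ξ)} G(ξ,s) ds|² dξ ≤ C g(t)⁵ (1+t)^{2(1-β)} in ℝ³; with g(t)² = a/(1+t) this is ≤ C(1+t)^{-(1/2 + 2β)}. -/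
/-!
Since `e^{-c(t-s)|ξ|²} ≤ 1`, the Duhamel integral is at most
`C|ξ| ∫₀ᵗ C(1+s)^{-β} ds ≤ C²/(1-β) |ξ| (1+t)^{1-β}`, a bound linear in `|ξ|`. Squaring it and
integrating over the ball of radius `g` in `ℝ³` gives `|B(0,1)| g³ · (C²/(1-β))² g² (1+t)^{2(1-β)}`.
For `g = √(a/(1+t))` the powers of `1+t` combine to `-5/2 + 2(1-β) = -(1/2 + 2β)`.
-/

open MeasureTheory Metric intervalIntegral

theorem integral_one_add_rpow_neg_le {β : ℝ} (t : ℝ) (hβ : β < 1) :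
    ∫ s in (0 : ℝ)..t, (1 + s) ^ (-β) ≤ (1 + t) ^ (1 - β) / (1 - β) := by
  have hβ' : 0 < 1 - β := by linarith
  rw [integral_comp_add_left (fun x : ℝ => x ^ (-β)), integral_rpow (Or.inl (by linarith)),
    add_zero, Real.one_rpow, show -β + 1 = 1 - β by ring]
  gcongr
  linarith

theorem integral_exp_mul_le_of_le_rpow {β c C r t : ℝ} {u : ℝ → ℝ} (hβ : β < 1)
    (hc : 0 ≤ c) (hC : 0 ≤ C) (hr : 0 ≤ r) (ht : 0 ≤ t) (hu₀ : ∀ s, 0 ≤ s → 0 ≤ u s)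
    (hu : ∀ s, 0 ≤ s → u s ≤ C * (1 + s) ^ (-β)) :
    ∫ s in (0 : ℝ)..t, Real.exp (-c * (t - s) * r ^ 2) * (C * r * u s)
      ≤ C ^ 2 / (1 - β) * r * (1 + t) ^ (1 - β) := by
  have hrpow : ContinuousOn (fun s : ℝ => (1 + s) ^ (-β)) (Set.Icc 0 t) := fun s hs =>
    (ContinuousAt.rpow_const (f := fun s : ℝ => 1 + s) (by fun_prop)
      (Or.inl (by linarith [hs.1]))).continuousWithinAt
  calc ∫ s in (0 : ℝ)..t, Real.exp (-c * (t - s) * r ^ 2) * (C * r * u s)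
      ≤ ∫ s in (0 : ℝ)..t, C * r * C * (1 + s) ^ (-β) := by
        rw [integral_of_le ht, integral_of_le ht]
        refine integral_mono_of_nonneg ?_ ?_ ?_
        · filter_upwards [ae_restrict_mem measurableSet_Ioc] with s hs
          have := hu₀ s hs.1.le
          positivity
        · exact (hrpow.integrableOn_Icc.mono_set Set.Ioc_subset_Icc_self).const_mul _
        · filter_upwards [ae_restrict_mem measurableSet_Ioc] with s hs
          have hexp : Real.exp (-c * (t - s) * r ^ 2) ≤ 1 := Real.exp_le_one_iff.2 <| by
            have := mul_nonneg (mul_nonneg hc (sub_nonneg.2 hs.2)) (sq_nonneg r)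
            linarith
          have hus := hu₀ s hs.1.le
          calc Real.exp (-c * (t - s) * r ^ 2) * (C * r * u s) ≤ C * r * u s :=
                mul_le_of_le_one_left (by positivity) hexp
            _ ≤ C * r * (C * (1 + s) ^ (-β)) := by
                gcongr
                exact hu s hs.1.le
            _ = C * r * C * (1 + s) ^ (-β) := by ring
    _ = C * r * C * ∫ s in (0 : ℝ)..t, (1 + s) ^ (-β) := integral_const_mul _ _
    _ ≤ C * r * C * ((1 + t) ^ (1 - β) / (1 - β)) := by
        gcongr
        exact integral_one_add_rpow_neg_le t hβ
    _ = C ^ 2 / (1 - β) * r * (1 + t) ^ (1 - β) := by ring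

theorem setIntegral_ball_norm_sq_le_of_norm_le {E F : Type*} [NormedAddCommGroup E]
    [NormedSpace ℝ E] [Nontrivial E] [MeasurableSpace E] [BorelSpace E]
    [FiniteDimensional ℝ E] [NormedAddCommGroup F] (μ : Measure E) [μ.IsAddHaarMeasure]
    {f : E → F} {A g : ℝ} (hA : 0 ≤ A) (hg : 0 ≤ g)
    (hf : ∀ ξ ∈ ball (0 : E) g, ‖f ξ‖ ≤ A * ‖ξ‖) :
    ∫ ξ in ball (0 : E) g, ‖f ξ‖ ^ 2 ∂μ
      ≤ A ^ 2 * μ.real (ball 0 1) * g ^ (Module.finrank ℝ E + 2) := by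
  calc ∫ ξ in ball (0 : E) g, ‖f ξ‖ ^ 2 ∂μ ≤ ∫ _ in ball (0 : E) g, (A * g) ^ 2 ∂μ := by
        refine integral_mono_of_nonneg (.of_forall fun _ => by positivity)
          (integrableOn_const measure_ball_lt_top.ne) ?_
        filter_upwards [ae_restrict_mem measurableSet_ball] with ξ hξ
        have hξg : ‖ξ‖ ≤ g := (mem_ball_zero_iff.1 hξ).le
        gcongr
        exact (hf ξ hξ).trans (by gcongr)
    _ = g ^ Module.finrank ℝ E * μ.real (ball 0 1) * (A * g) ^ 2 := by
        rw [setIntegral_const, smul_eq_mul, measureReal_def, Measure.addHaar_ball μ 0 hg,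
          ENNReal.toReal_mul, ENNReal.toReal_ofReal (by positivity), ← measureReal_def]
    _ = A ^ 2 * μ.real (ball 0 1) * g ^ (Module.finrank ℝ E + 2) := by ring

theorem Real.sqrt_div_rpow_five_mul_rpow {a x : ℝ} (β : ℝ) (ha : 0 ≤ a) (hx : 0 < x) :
    √(a / x) ^ (5 : ℝ) * x ^ (2 * (1 - β)) = a ^ (5 / 2 : ℝ) * x ^ (-(1 / 2 + 2 * β)) := by
  rw [Real.sqrt_eq_rpow, ← Real.rpow_mul (by positivity), Real.div_rpow ha hx.le,
    div_mul_eq_mul_div, mul_div_assoc, ← Real.rpow_sub hx]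
  congr 2 <;> ring

theorem compressible_duhamel_low_frequency_bound_general
    (β c C : ℝ) (hβ1 : β < 1) (hc : 0 < c) (hC : 0 < C)
    (u2 : ℝ → ℝ) (hu2nonneg : ∀ s : ℝ, 0 ≤ s → 0 ≤ u2 s)
    (hu2 : ∀ s : ℝ, 0 ≤ s → u2 s ≤ C * (1 + s) ^ (-β))
    (D : EuclideanSpace ℝ (Fin 3) → ℝ → EuclideanSpace ℝ (Fin 3))
    (hD : ∀ (ξ : EuclideanSpace ℝ (Fin 3)) (t : ℝ), 0 ≤ t →
      ‖D ξ t‖ ≤ ∫ s in (0 : ℝ)..t, Real.exp (-c * (t - s) * ‖ξ‖ ^ 2) * (C * ‖ξ‖ * u2 s)) :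
    ∃ C' : ℝ, 0 < C' ∧
      (∀ t : ℝ, 0 ≤ t → ∀ g : ℝ, 0 < g →
        (∫ ξ in ball (0 : EuclideanSpace ℝ (Fin 3)) g, ‖D ξ t‖ ^ 2)
          ≤ C' * g ^ (5 : ℝ) * (1 + t) ^ (2 * (1 - β))) ∧
      (∀ a : ℝ, 0 < a → ∃ C'' : ℝ, 0 < C'' ∧ ∀ t : ℝ, 0 ≤ t →
        (∫ ξ in ball (0 : EuclideanSpace ℝ (Fin 3)) (Real.sqrt (a / (1 + t))), ‖D ξ t‖ ^ 2)
          ≤ C'' * (1 + t) ^ (-(1 / 2 + 2 * β))) := by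
  set K := C ^ 2 / (1 - β)
  set V := volume.real (ball (0 : EuclideanSpace ℝ (Fin 3)) 1)
  have hK : 0 < K := div_pos (by positivity) (by linarith)
  have hV : 0 < V :=
    ENNReal.toReal_pos (measure_ball_pos _ _ one_pos).ne' measure_ball_lt_top.ne
  have ball_bound : ∀ t : ℝ, 0 ≤ t → ∀ g : ℝ, 0 < g →
      ∫ ξ in ball (0 : EuclideanSpace ℝ (Fin 3)) g, ‖D ξ t‖ ^ 2
        ≤ K ^ 2 * V * g ^ (5 : ℝ) * (1 + t) ^ (2 * (1 - β)) := by
    intro t ht g hg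
    have pointwise : ∀ ξ ∈ ball (0 : EuclideanSpace ℝ (Fin 3)) g,
        ‖D ξ t‖ ≤ K * (1 + t) ^ (1 - β) * ‖ξ‖ := fun ξ _ =>
      (hD ξ t ht).trans <| (integral_exp_mul_le_of_le_rpow hβ1 hc.le hC.le (norm_nonneg ξ) ht
        hu2nonneg hu2).trans_eq (by ring)
    calc _ ≤ (K * (1 + t) ^ (1 - β)) ^ 2 * V
          * g ^ (Module.finrank ℝ (EuclideanSpace ℝ (Fin 3)) + 2) :=
          setIntegral_ball_norm_sq_le_of_norm_le volume (by positivity) hg.le pointwise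
      _ = _ := by
          rw [finrank_euclideanSpace_fin, mul_pow, ← Real.rpow_mul_natCast (by linarith),
            ← Real.rpow_natCast g]
          push_cast
          ring_nf
  refine ⟨K ^ 2 * V, by positivity, ball_bound, fun a ha =>
    ⟨K ^ 2 * V * a ^ (5 / 2 : ℝ), by positivity, fun t ht => ?_⟩⟩
  calc _ ≤ K ^ 2 * V * √(a / (1 + t)) ^ (5 : ℝ) * (1 + t) ^ (2 * (1 - β)) :=
        ball_bound t ht _ (Real.sqrt_pos.2 (by positivity))
    _ = _ := by
        rw [mul_assoc, Real.sqrt_div_rpow_five_mul_rpow β ha.le (by linarith)]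
        ring

/-- Low-frequency bound for the compressible model's Duhamel term in `ℝ³`.
If the Duhamel term `D(ξ,t) = ∫₀ᵗ e^{(t-s)M(ξ)} G(ξ,s) ds` satisfies
`|D(ξ,t)| ≤ ∫₀ᵗ e^{-c(t-s)|ξ|²} C|ξ| u2(s) ds` (from `|G(ξ,s)| ≤ C|ξ|‖u(s)‖²_{L²}` and
`|e^{(t-s)M(ξ)}| ≤ e^{-c(t-s)|ξ|²}`), where `u2(s) = ‖u(s)‖²_{L²} ≤ C(1+s)^{-β}` with
`0 ≤ β < 1`, then `∫_{B(g(t))} |D(ξ,t)|² dξ ≤ C' g(t)⁵ (1+t)^{2(1-β)}`; with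
`g(t)² = a/(1+t)` this is `≤ C''(1+t)^{-(1/2+2β)}`. -/
theorem compressible_duhamel_low_frequency_bound
    (β c C : ℝ) (hβ0 : 0 ≤ β) (hβ1 : β < 1) (hc : 0 < c) (hC : 0 < C)
    (u2 : ℝ → ℝ) (hu2cont : Continuous u2) (hu2nonneg : ∀ s : ℝ, 0 ≤ s → 0 ≤ u2 s)
    (hu2 : ∀ s : ℝ, 0 ≤ s → u2 s ≤ C * (1 + s) ^ (-β))
    (D : EuclideanSpace ℝ (Fin 3) → ℝ → EuclideanSpace ℝ (Fin 3))
    (hD : ∀ (ξ : EuclideanSpace ℝ (Fin 3)) (t : ℝ), 0 ≤ t →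
      ‖D ξ t‖ ≤ ∫ s in (0 : ℝ)..t, Real.exp (-c * (t - s) * ‖ξ‖ ^ 2) * (C * ‖ξ‖ * u2 s)) :
    ∃ C' : ℝ, 0 < C' ∧
      (∀ t : ℝ, 0 ≤ t → ∀ g : ℝ, 0 < g →
        (∫ ξ in ball (0 : EuclideanSpace ℝ (Fin 3)) g, ‖D ξ t‖ ^ 2)
          ≤ C' * g ^ (5 : ℝ) * (1 + t) ^ (2 * (1 - β))) ∧
      (∀ a : ℝ, 0 < a → ∃ C'' : ℝ, 0 < C'' ∧ ∀ t : ℝ, 0 ≤ t →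
        (∫ ξ in ball (0 : EuclideanSpace ℝ (Fin 3)) (Real.sqrt (a / (1 + t))), ‖D ξ t‖ ^ 2)
          ≤ C'' * (1 + t) ^ (-(1 / 2 + 2 * β))) :=
  compressible_duhamel_low_frequency_bound_general β c C hβ1 hc hC u2 hu2nonneg hu2 D hD
end
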